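/- arXiv:2203.02716 — 6 statements merged into one kernel-verified Lean document; each statement's English description precedes it below -/
import Mathlib

section
/- Let X and V be real normed vector spaces and let T : X → V be a compact continuous linear operator, i.e., the image under T of every bounded set is totally bounded. Let ι be an index type with a mesh-size function h : ι → ℝ, and let S : ι → Submodule ℝ V assign to each index a linear subspace of V. Assume that for every v ∈ V and every ε > 0 there exists δ > 0 such that every index i with h i ≤ δ satisfies infDist(v, S i) < ε. Then for every ε > 0 there exists δ > 0 such that for every g ∈ X and every index i with h i ≤ δ one has infDist(T g, S i) ≤ ε · ‖g‖. -/
/-!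
The image `K` of the unit ball under the compact operator `T` is totally bounded, so it has a
finite `ε/2`-net; the finitely many mesh thresholds of the net points have a positive minimum,
below which every point of `K` is within `ε` of `S i`. Since `S i` is a subspace, for `g ≠ 0`
`infDist (T g) (S i) = ‖g‖ * infDist (T (‖g‖⁻¹ • g)) (S i)`, which turns the bound on `K` into
the bound `ε * ‖g‖`.
-/

open Metric Pointwise Set

lemma exists_pos_forall_of_finite {α ι : Type*} {t : Set α} (ht : t.Finite) (h : ι → ℝ)
    {P : α → ι → Prop} (hP : ∀ v ∈ t, ∃ δ > 0, ∀ i, h i ≤ δ → P v i) :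
    ∃ δ > 0, ∀ v ∈ t, ∀ i, h i ≤ δ → P v i := by
  have hev : ∀ v ∈ t, ∀ᶠ δ in nhdsWithin (0 : ℝ) (Ioi 0), ∀ i, h i ≤ δ → P v i := by
    intro v hv
    obtain ⟨δ, hδ, hδP⟩ := hP v hv
    filter_upwards [Ioc_mem_nhdsGT hδ] with δ' hδ' i hi using hδP i (hi.trans hδ'.2)
  obtain ⟨δ, hδ, hδP⟩ := (eventually_mem_nhdsWithin.and (ht.eventually_all.2 hev)).exists
  exact ⟨δ, hδ, hδP⟩

lemma TotallyBounded.exists_pos_forall_infDist_lt {α ι : Type*} [PseudoMetricSpace α]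
    {K : Set α} (hK : TotallyBounded K) (h : ι → ℝ) (S : ι → Set α)
    (happrox : ∀ v : α, ∀ ε > (0 : ℝ), ∃ δ > (0 : ℝ), ∀ i, h i ≤ δ → infDist v (S i) < ε)
    {ε : ℝ} (hε : 0 < ε) :
    ∃ δ > 0, ∀ v ∈ K, ∀ i, h i ≤ δ → infDist v (S i) < ε := by
  obtain ⟨t, ht, hKt⟩ := totallyBounded_iff.1 hK (ε / 2) (half_pos hε)
  obtain ⟨δ, hδ, hδt⟩ :=
    exists_pos_forall_of_finite ht h fun y _ => happrox y (ε / 2) (half_pos hε)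
  refine ⟨δ, hδ, fun v hv i hi => ?_⟩
  obtain ⟨y, hy, hvy⟩ := mem_iUnion₂.1 (hKt hv)
  calc infDist v (S i) ≤ infDist y (S i) + dist v y := infDist_le_infDist_add_dist
    _ < ε / 2 + ε / 2 := add_lt_add (hδt y hy i hi) (mem_ball.1 hvy)
    _ = ε := add_halves ε

lemma Submodule.infDist_smul {𝕜 V : Type*} [NormedField 𝕜] [NormedAddCommGroup V]
    [NormedSpace 𝕜 V] (S : Submodule 𝕜 V) (c : 𝕜) (v : V) :
    infDist (c • v) (S : Set V) = ‖c‖ * infDist v (S : Set V) := by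
  rcases eq_or_ne c 0 with rfl | hc
  · simp [infDist_zero_of_mem S.zero_mem]
  have hS : c • (S : Set V) = S := by
    ext x
    simp [mem_smul_set_iff_inv_smul_mem₀ hc, S.smul_mem_iff (inv_ne_zero hc)]
  rw [← infDist_smul₀ hc, hS]

lemma infDist_map_le_mul_norm {X V F : Type*} [NormedAddCommGroup X] [NormedSpace ℝ X]
    [NormedAddCommGroup V] [NormedSpace ℝ V] [FunLike F X V] [LinearMapClass F ℝ X V] (T : F)
    (S : Submodule ℝ V) {ε : ℝ} (hT : ∀ u ∈ closedBall (0 : X) 1, infDist (T u) (S : Set V) ≤ ε)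
    (g : X) : infDist (T g) (S : Set V) ≤ ε * ‖g‖ := by
  rcases eq_or_ne g 0 with rfl | hg
  · simp [infDist_zero_of_mem S.zero_mem]
  have hgn : ‖g‖ ≠ 0 := norm_ne_zero_iff.2 hg
  have hu : ‖g‖⁻¹ • g ∈ closedBall (0 : X) 1 := by
    simp [norm_smul, inv_mul_cancel₀ hgn]
  have hTg : T g = ‖g‖ • T (‖g‖⁻¹ • g) := by
    rw [map_smul, smul_inv_smul₀ hgn]
  calc infDist (T g) (S : Set V) = ‖g‖ * infDist (T (‖g‖⁻¹ • g)) (S : Set V) := by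
        rw [hTg, S.infDist_smul, Real.norm_of_nonneg (norm_nonneg g)]
    _ ≤ ‖g‖ * ε := mul_le_mul_of_nonneg_left (hT _ hu) (norm_nonneg g)
    _ = ε * ‖g‖ := mul_comm _ _

/-- Abstract core of Lemma 4 (uniform approximation of solutions): if
`T : X → V` is a compact continuous linear operator (images of bounded sets
are totally bounded) and every vector of `V` can be approximated with
arbitrary accuracy by the linear subspaces `S i` for sufficiently small mesh
size `h i`, then for every `ε > 0` there is a mesh-size threshold `δ > 0`
such that `infDist (T g) (S i) ≤ ε * ‖g‖` whenever `h i ≤ δ`. -/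
theorem uniform_approximation_of_solutions
    {X V : Type*} [NormedAddCommGroup X] [NormedSpace ℝ X]
    [NormedAddCommGroup V] [NormedSpace ℝ V]
    (T : X →L[ℝ] V)
    (hT : ∀ s : Set X, Bornology.IsBounded s → TotallyBounded (T '' s))
    {ι : Type*} (h : ι → ℝ) (S : ι → Submodule ℝ V)
    (happrox : ∀ v : V, ∀ ε > (0 : ℝ), ∃ δ > (0 : ℝ),
      ∀ i, h i ≤ δ → Metric.infDist v (S i : Set V) < ε) :
    ∀ ε > (0 : ℝ), ∃ δ > (0 : ℝ),
      ∀ g : X, ∀ i, h i ≤ δ → Metric.infDist (T g) (S i : Set V) ≤ ε * ‖g‖ := by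
  intro ε hε
  have hK : TotallyBounded (T '' closedBall 0 1) := hT _ isBounded_closedBall
  obtain ⟨δ, hδ, hδK⟩ := hK.exists_pos_forall_infDist_lt h (fun i => S i) happrox hε
  exact ⟨δ, hδ, fun g i hi =>
    infDist_map_le_mul_norm T (S i) (fun u hu => (hδK _ (mem_image_of_mem T hu) i hi).le) g⟩
end

section
/- Let H be a real Hilbert space, let b : H × H → ℝ be a bilinear form, and let C ≥ 0 satisfy |b(x, y)| ≤ C‖x‖‖y‖ for all x, y ∈ H. Let X_h and Y_h be subspaces of H, let β > 0, and let ε ≥ 0 with ε·C < 1. Assume that for every x_h ∈ X_h with ‖x_h‖ = 1 there exist y ∈ H and y_h ∈ Y_h such that (i) ⟨x_h, z⟩ = b(z, y) for all z ∈ H, (ii) ‖y‖ ≤ 1/β, and (iii) ‖y − y_h‖ ≤ ε. Then for every x_h ∈ X_h with ‖x_h‖ = 1 one has sup{ b(x_h, y_h) / ‖y_h‖ : y_h ∈ Y_h, y_h ≠ 0 } ≥ β(1 − εC)/(1 + εβ); in particular the discrete inf-sup constant inf over unit x_h ∈ X_h of this supremum is at least β(1 − εC)/(1 + εβ). -/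
/-!
Testing `b(x_h, ·)` against the discrete approximation `y_h` of the dual solution `y`:
since `b(x_h, y) = ‖x_h‖² = 1` and `|b(x_h, y - y_h)| ≤ εC`, we get `b(x_h, y_h) ≥ 1 - εC > 0`,
while `‖y_h‖ ≤ ‖y‖ + ε ≤ 1/β + ε`. The quotient `b(x_h, y_h)/‖y_h‖` is therefore at least
`(1 - εC)/(1/β + ε) = β(1 - εC)/(1 + εβ)`.
-/

section BoundedBilinear

variable {E : Type*} [NormedAddCommGroup E] [Module ℝ E]
  {b : E →ₗ[ℝ] E →ₗ[ℝ] ℝ} {C : ℝ}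

lemma sub_mul_norm_sub_le_of_abs_le (hb : ∀ x y : E, |b x y| ≤ C * ‖x‖ * ‖y‖) (x y yh : E) :
    b x y - C * ‖x‖ * ‖y - yh‖ ≤ b x yh := by
  have hdiff : b x (y - yh) = b x y - b x yh := map_sub (b x) y yh
  linarith [le_of_abs_le (hb x (y - yh))]

lemma bddAbove_apply_div_norm_of_abs_le (hb : ∀ x y : E, |b x y| ≤ C * ‖x‖ * ‖y‖) (x : E)
    (Y : Submodule ℝ E) :
    BddAbove {r : ℝ | ∃ yh ∈ Y, yh ≠ 0 ∧ r = b x yh / ‖yh‖} := by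
  refine ⟨C * ‖x‖, ?_⟩
  rintro r ⟨z, -, hz, rfl⟩
  rw [div_le_iff₀ (norm_pos_iff.mpr hz)]
  exact (le_abs_self _).trans (hb x z)

end BoundedBilinear

lemma mul_div_one_add_mul_le_div {a t n β ε : ℝ} (hβ : 0 < β) (hε : 0 ≤ ε)
    (ha : 0 ≤ a) (hat : a ≤ t) (hn : 0 < n) (hnle : n ≤ 1 / β + ε) :
    β * a / (1 + ε * β) ≤ t / n :=
  calc β * a / (1 + ε * β) = a / (1 / β + ε) := by field_simp
    _ ≤ a / n := div_le_div_of_nonneg_left ha hn hnle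
    _ ≤ t / n := div_le_div_of_nonneg_right hat hn.le

theorem abstract_discrete_infsup_general
    {H : Type*} [NormedAddCommGroup H] [InnerProductSpace ℝ H]
    (b : H →ₗ[ℝ] H →ₗ[ℝ] ℝ) (C : ℝ) (hC : 0 ≤ C)
    (hb : ∀ x y : H, |b x y| ≤ C * ‖x‖ * ‖y‖)
    (Xh Yh : Submodule ℝ H) (β ε : ℝ) (hβ : 0 < β) (hε : 0 ≤ ε)
    (hεC : ε * C < 1)
    (hdual : ∀ xh ∈ Xh, ‖xh‖ = 1 → ∃ y : H, ∃ yh ∈ Yh,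
      (∀ z : H, (inner ℝ xh z : ℝ) = b z y) ∧ ‖y‖ ≤ 1 / β ∧ ‖y - yh‖ ≤ ε) :
    ∀ xh ∈ Xh, ‖xh‖ = 1 →
      β * (1 - ε * C) / (1 + ε * β) ≤
        sSup {r : ℝ | ∃ yh ∈ Yh, yh ≠ 0 ∧ r = b xh yh / ‖yh‖} := by
  intro xh hxhX hxh
  obtain ⟨y, yh, hyhY, hdy, hy, hyyh⟩ := hdual xh hxhX hxh
  have hbxy : b xh y = 1 := by rw [← hdy, real_inner_self_eq_norm_sq, hxh, one_pow]
  have hbxyh : 1 - ε * C ≤ b xh yh := by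
    have := sub_mul_norm_sub_le_of_abs_le hb xh y yh
    rw [hbxy, hxh, mul_one] at this
    linarith [mul_le_mul_of_nonneg_left hyyh hC]
  have hyh : yh ≠ 0 := by
    rintro rfl
    rw [map_zero] at hbxyh
    linarith
  have hyh_norm : ‖yh‖ ≤ 1 / β + ε := by linarith [norm_le_norm_add_norm_sub y yh]
  calc β * (1 - ε * C) / (1 + ε * β) ≤ b xh yh / ‖yh‖ :=
        mul_div_one_add_mul_le_div hβ hε (by linarith) hbxyh (norm_pos_iff.mpr hyh) hyh_norm
    _ ≤ _ := le_csSup (bddAbove_apply_div_norm_of_abs_le hb xh Yh) ⟨yh, hyhY, hyh, rfl⟩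

/-- The abstract stability argument of Subsection 1.4 (inequality (1.10)):
if each unit vector `x_h ∈ X_h` admits a dual solution `y` with
`⟨x_h, z⟩ = b(z, y)` for all `z`, `‖y‖ ≤ 1/β`, and a discrete approximation
`y_h ∈ Y_h` with `‖y - y_h‖ ≤ ε`, then the discrete inf-sup constant is at
least `β(1 - εC)/(1 + εβ)`. -/
theorem abstract_discrete_infsup
    {H : Type*} [NormedAddCommGroup H] [InnerProductSpace ℝ H] [CompleteSpace H]
    (b : H →ₗ[ℝ] H →ₗ[ℝ] ℝ) (C : ℝ) (hC : 0 ≤ C)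
    (hb : ∀ x y : H, |b x y| ≤ C * ‖x‖ * ‖y‖)
    (Xh Yh : Submodule ℝ H) (β ε : ℝ) (hβ : 0 < β) (hε : 0 ≤ ε)
    (hεC : ε * C < 1)
    (hdual : ∀ xh ∈ Xh, ‖xh‖ = 1 → ∃ y : H, ∃ yh ∈ Yh,
      (∀ z : H, (inner ℝ xh z : ℝ) = b z y) ∧ ‖y‖ ≤ 1 / β ∧ ‖y - yh‖ ≤ ε) :
    ∀ xh ∈ Xh, ‖xh‖ = 1 →
      β * (1 - ε * C) / (1 + ε * β) ≤
        sSup {r : ℝ | ∃ yh ∈ Yh, yh ≠ 0 ∧ r = b xh yh / ‖yh‖} :=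
  abstract_discrete_infsup_general b C hC hb Xh Yh β ε hβ hε hεC hdual
end

section
/- Let n ∈ ℕ, let v₀, v₁, …, vₙ be n + 1 points of a real normed vector space, let c := (1/(n+1)) · (v₀ + v₁ + ⋯ + vₙ) be their barycenter, and let h ≥ 0 satisfy ‖vᵢ − vⱼ‖ ≤ h for all 0 ≤ i, j ≤ n. Then every point x in the convex hull of {v₀, v₁, …, vₙ} satisfies ‖x − c‖ ≤ (n/(n+1)) · h. -/
/-!
The vector `vᵢ - c` is the average of the `n + 1` differences `vᵢ - vⱼ`, one of which vanishes,
so every vertex lies within `(n/(n+1)) h` of `c`. Since `x ↦ ‖x - c‖` is convex, its maximum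
over the convex hull is attained at a vertex.
-/

open Finset

section

variable {V : Type*} [NormedAddCommGroup V] {ι : Type*} [Fintype ι]

theorem sub_inv_card_smul_sum_eq [NormedSpace ℝ V] (v : ι → V) (i : ι) :
    v i - (Fintype.card ι : ℝ)⁻¹ • ∑ j, v j = (Fintype.card ι : ℝ)⁻¹ • ∑ j, (v i - v j) := by
  have hcard : (Fintype.card ι : ℝ) ≠ 0 := Nat.cast_ne_zero.2 (Fintype.card_pos_iff.2 ⟨i⟩).ne'
  rw [sum_sub_distrib, sum_const, card_univ, ← Nat.cast_smul_eq_nsmul ℝ, smul_sub, smul_smul,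
    inv_mul_cancel₀ hcard, one_smul]

theorem norm_sum_sub_le_of_forall_norm_sub_le (v : ι → V) (i : ι) {h : ℝ}
    (hvh : ∀ j, ‖v i - v j‖ ≤ h) :
    ‖∑ j, (v i - v j)‖ ≤ (Fintype.card ι - 1) * h := by
  classical
  calc ‖∑ j, (v i - v j)‖ ≤ ∑ j, ‖v i - v j‖ := norm_sum_le _ _
    _ = ∑ j ∈ univ.erase i, ‖v i - v j‖ := by rw [sum_erase _ (by simp)]
    _ ≤ ∑ _j ∈ univ.erase i, h := sum_le_sum fun j _ => hvh j
    _ = (Fintype.card ι - 1) * h := by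
      rw [sum_const, card_erase_of_mem (mem_univ i), card_univ, nsmul_eq_mul,
        Nat.cast_pred (Fintype.card_pos_iff.2 ⟨i⟩)]

theorem norm_sub_inv_card_smul_sum_le [NormedSpace ℝ V] (v : ι → V) (i : ι) {h : ℝ}
    (hvh : ∀ j, ‖v i - v j‖ ≤ h) :
    ‖v i - (Fintype.card ι : ℝ)⁻¹ • ∑ j, v j‖ ≤ (Fintype.card ι - 1) / Fintype.card ι * h := by
  rw [sub_inv_card_smul_sum_eq, norm_smul, norm_inv, Real.norm_natCast, div_mul_eq_mul_div,
    inv_mul_eq_div]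
  gcongr
  exact norm_sum_sub_le_of_forall_norm_sub_le v i hvh

end

theorem dist_barycenter_le_of_mem_convexHull_general
    {V : Type*} [NormedAddCommGroup V] [NormedSpace ℝ V]
    (n : ℕ) (v : Fin (n + 1) → V) (c : V)
    (hc : c = ((n : ℝ) + 1)⁻¹ • ∑ i, v i)
    (h : ℝ) (hvh : ∀ i j, ‖v i - v j‖ ≤ h) :
    ∀ x ∈ convexHull ℝ (Set.range v), ‖x - c‖ ≤ ((n : ℝ) / ((n : ℝ) + 1)) * h := by
  intro x hx
  obtain ⟨_, ⟨i, rfl⟩, hxi⟩ := convexHull_exists_dist_ge hx c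
  rw [← dist_eq_norm]
  refine hxi.trans ?_
  simpa [dist_eq_norm, hc] using norm_sub_inv_card_smul_sum_le v i (hvh i)

/-- Geometric ingredient of Lemma 7 (appendix): if `n + 1` points of a real
normed space have mutual distances at most `h`, then every point of their
convex hull is within distance `(n/(n+1)) h` of their barycenter. -/
theorem dist_barycenter_le_of_mem_convexHull
    {V : Type*} [NormedAddCommGroup V] [NormedSpace ℝ V]
    (n : ℕ) (v : Fin (n + 1) → V) (c : V)
    (hc : c = ((n : ℝ) + 1)⁻¹ • ∑ i, v i)
    (h : ℝ) (hh : 0 ≤ h) (hvh : ∀ i j, ‖v i - v j‖ ≤ h) :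
    ∀ x ∈ convexHull ℝ (Set.range v), ‖x - c‖ ≤ ((n : ℝ) / ((n : ℝ) + 1)) * h :=
  dist_barycenter_le_of_mem_convexHull_general n v c hc h hvh
end

section
/- Let n ∈ ℕ with n ≥ 1 and k ∈ ℕ. Let g be a multivariate polynomial in n variables over ℝ with total degree at most k, and let p = (p₁, …, pₙ) be an n-tuple of multivariate polynomials in n variables over ℝ, each of total degree at most k. Define τᵢ := g · Xᵢ + pᵢ for i = 1, …, n, and let d := Σᵢ ∂τᵢ/∂xᵢ be the (polynomial) divergence of τ. Then for each i the polynomial (n + k) · τᵢ − d · Xᵢ has total degree at most k; equivalently, there exists an n-tuple r = (r₁, …, rₙ) of polynomials of total degree at most k such that τᵢ = (n + k)⁻¹ · d · Xᵢ + rᵢ for all i. -/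
open MvPolynomial

lemma coeff_pderiv' {n : ℕ} (j : Fin n) (φ : MvPolynomial (Fin n) ℝ) (m : Fin n →₀ ℕ) :
    MvPolynomial.coeff m (MvPolynomial.pderiv j φ)
      = (m j + 1 : ℝ) * MvPolynomial.coeff (m + Finsupp.single j 1) φ := by
  induction φ using MvPolynomial.induction_on' with
  | add p q hp hq => simp [hp, hq, mul_add]
  | monomial s c =>
    rw [pderiv_monomial]
    simp only [coeff_monomial]
    by_cases h : s = m + Finsupp.single j 1
    · subst h
      rw [if_pos (add_tsub_cancel_right _ _)]
      simp [mul_comm]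
    · rw [if_neg h]
      by_cases hs : s j = 0
      · have : s - Finsupp.single j 1 = s := by
          ext x
          rw [Finsupp.tsub_apply]
          by_cases hx : x = j
          · subst hx; simp [hs]
          · simp [Finsupp.single_apply, Ne.symm hx]
        rw [this]
        by_cases hsm : s = m
        · subst hsm; simp [hs]
        · simp [hsm]
      · have hle : Finsupp.single j 1 ≤ s :=
          Finsupp.single_le_iff.mpr (Nat.one_le_iff_ne_zero.mpr hs)
        have : s - Finsupp.single j 1 ≠ m := by
          intro he
          exact h (by rw [← he, tsub_add_cancel_of_le hle])
        simp [this]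

lemma sum_single_apply {n : ℕ} (i : Fin n) : ∑ j, (Finsupp.single i 1 : Fin n →₀ ℕ) j = 1 := by
  simp [Finsupp.single_apply]

lemma totalDegree_mul_X_le {n k : ℕ} (A : MvPolynomial (Fin n) ℝ) (i : Fin n)
    (h : ∀ m : Fin n →₀ ℕ, k ≤ ∑ j, m j → MvPolynomial.coeff m A = 0) :
    (A * MvPolynomial.X i).totalDegree ≤ k := by
  classical
  rw [MvPolynomial.totalDegree]
  apply Finset.sup_le
  intro m hm
  rw [MvPolynomial.mem_support_iff, MvPolynomial.coeff_mul_X'] at hm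
  by_cases hi : i ∈ m.support
  · rw [if_pos hi] at hm
    have h1 : ¬ k ≤ ∑ j, (m - Finsupp.single i 1 : Fin n →₀ ℕ) j := fun hk => hm (h _ hk)
    push_neg at h1
    have hle : Finsupp.single i 1 ≤ m := by
      rw [Finsupp.single_le_iff, Nat.one_le_iff_ne_zero]
      exact Finsupp.mem_support_iff.mp hi
    have h2 : ∑ j, m j = (∑ j, (m - Finsupp.single i 1 : Fin n →₀ ℕ) j) + 1 := by
      have hc := tsub_add_cancel_of_le hle
      calc ∑ j, m j
          = ∑ j, ((m - Finsupp.single i 1) + Finsupp.single i 1 : Fin n →₀ ℕ) j := by rw [hc]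
        _ = ∑ j, ((m - Finsupp.single i 1 : Fin n →₀ ℕ) j
              + (Finsupp.single i 1 : Fin n →₀ ℕ) j) := by
            simp [Finsupp.add_apply]
        _ = (∑ j, (m - Finsupp.single i 1 : Fin n →₀ ℕ) j)
              + ∑ j, (Finsupp.single i 1 : Fin n →₀ ℕ) j := Finset.sum_add_distrib
        _ = _ + 1 := by rw [sum_single_apply]
    have h3 : (m.sum fun _ e => e) = ∑ j, m j := Finsupp.sum_fintype _ _ (fun _ => rfl)
    omega
  · rw [if_neg hi] at hm
    exact absurd rfl hm

lemma coeff_zero_of_deg {n k : ℕ} (φ : MvPolynomial (Fin n) ℝ)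
    (hφ : φ.totalDegree ≤ k) (m : Fin n →₀ ℕ) (h : k < ∑ j, m j) :
    MvPolynomial.coeff m φ = 0 := by
  apply MvPolynomial.coeff_eq_zero_of_totalDegree_lt
  have h3 : (∑ x ∈ m.support, m x) = ∑ j, m j :=
    Finset.sum_subset (Finset.subset_univ _) (by
      intro x _ hx; exact Finsupp.notMem_support_iff.mp hx)
  omega

/-- Structural decomposition of Raviart–Thomas shape functions (appendix,
proof of Lemma 7): if `τᵢ = g Xᵢ + pᵢ` with `g` and all `pᵢ` of total degree
at most `k`, and `d = ∑ i, ∂τᵢ/∂xᵢ` is the polynomial divergence of `τ`,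
then each `(n + k) τᵢ − d Xᵢ` has total degree at most `k`; equivalently,
`τ = (n+k)⁻¹ d(x) x + r` with `r` of degree at most `k`. -/
theorem raviartThomas_decomposition
    (n k : ℕ) (hn : 1 ≤ n)
    (g : MvPolynomial (Fin n) ℝ) (hg : g.totalDegree ≤ k)
    (p : Fin n → MvPolynomial (Fin n) ℝ) (hp : ∀ i, (p i).totalDegree ≤ k)
    (τ : Fin n → MvPolynomial (Fin n) ℝ)
    (hτ : ∀ i, τ i = g * MvPolynomial.X i + p i)
    (d : MvPolynomial (Fin n) ℝ)
    (hd : d = ∑ i, MvPolynomial.pderiv i (τ i)) :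
    ∀ i, ((n + k) • τ i - d * MvPolynomial.X i).totalDegree ≤ k := by
  classical
  intro i
  set E : MvPolynomial (Fin n) ℝ := ∑ j, MvPolynomial.X j * MvPolynomial.pderiv j g with hE
  set D : MvPolynomial (Fin n) ℝ := ∑ j, MvPolynomial.pderiv j (p j) with hD
  -- coefficient of a monomial m beyond total degree k vanishes
  have hcoeffg : ∀ m : Fin n →₀ ℕ, k < ∑ j, m j → MvPolynomial.coeff m g = 0 :=
    coeff_zero_of_deg g hg
  -- Euler-type coefficient identity
  have hEc : ∀ m : Fin n →₀ ℕ, MvPolynomial.coeff m E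
      = (∑ j, (m j : ℝ)) * MvPolynomial.coeff m g := by
    intro m
    rw [hE, MvPolynomial.coeff_sum, Finset.sum_mul]
    apply Finset.sum_congr rfl
    intro j _
    rw [MvPolynomial.coeff_X_mul']
    by_cases hj : j ∈ m.support
    · rw [if_pos hj, coeff_pderiv']
      have h1 : Finsupp.single j 1 ≤ m := by
        rw [Finsupp.single_le_iff, Nat.one_le_iff_ne_zero]
        exact Finsupp.mem_support_iff.mp hj
      rw [tsub_add_cancel_of_le h1]
      congr 1
      rw [Finsupp.tsub_apply, Finsupp.single_eq_same]
      have : 1 ≤ m j := Nat.one_le_iff_ne_zero.mpr (Finsupp.mem_support_iff.mp hj)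
      push_cast [Nat.cast_sub this]
      ring
    · rw [if_neg hj]
      have : m j = 0 := Finsupp.notMem_support_iff.mp hj
      simp [this]
  -- divergence decomposition
  have hdE : d = n • g + E + D := by
    rw [hd]
    have hterm : ∀ j, MvPolynomial.pderiv j (τ j)
        = MvPolynomial.X j * MvPolynomial.pderiv j g + g + MvPolynomial.pderiv j (p j) := by
      intro j
      rw [hτ j, map_add, MvPolynomial.pderiv_mul, MvPolynomial.pderiv_X_self]
      ring
    simp_rw [hterm]
    rw [Finset.sum_add_distrib, Finset.sum_add_distrib, Finset.sum_const, Finset.card_univ,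
      Fintype.card_fin, ← hE, ← hD]
    abel
  -- algebraic regrouping
  have key : (n + k) • τ i - d * MvPolynomial.X i
      = (k • g - E) * MvPolynomial.X i
        + ((n + k) • p i - D * MvPolynomial.X i) := by
    rw [hτ i, hdE]
    simp only [nsmul_eq_mul, Nat.cast_add]
    ring
  rw [key]
  refine le_trans (MvPolynomial.totalDegree_add _ _) (max_le ?_ ?_)
  · -- (k • g - E) * X i
    apply totalDegree_mul_X_le
    intro m hm
    have : MvPolynomial.coeff m (k • g - E)
        = ((k : ℝ) - ∑ j, (m j : ℝ)) * MvPolynomial.coeff m g := by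
      rw [MvPolynomial.coeff_sub, hEc, MvPolynomial.coeff_smul]
      push_cast
      ring
    rw [this]
    rcases eq_or_lt_of_le hm with h | h
    · have : ((k : ℝ) - ∑ j, (m j : ℝ)) = 0 := by
        rw [h]; push_cast; ring
      rw [this, zero_mul]
    · rw [hcoeffg m h, mul_zero]
  · -- (n+k) • p i - D * X i
    have h1 : ((n + k) • p i : MvPolynomial (Fin n) ℝ).totalDegree ≤ k :=
      le_trans (MvPolynomial.totalDegree_smul_le _ _) (hp i)
    have h2 : (D * MvPolynomial.X i).totalDegree ≤ k := by
      apply totalDegree_mul_X_le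
      intro m hm
      rw [hD, MvPolynomial.coeff_sum]
      apply Finset.sum_eq_zero
      intro j _
      rw [coeff_pderiv']
      have hsum : k < ∑ j', (m + Finsupp.single j 1 : Fin n →₀ ℕ) j' := by
        have : ∑ j', (m + Finsupp.single j 1 : Fin n →₀ ℕ) j' = (∑ j', m j') + 1 := by
          simp only [Finsupp.add_apply, Finset.sum_add_distrib, sum_single_apply]
        omega
      rw [coeff_zero_of_deg (p j) (hp j) _ hsum, mul_zero]
    calc ((n + k) • p i - D * MvPolynomial.X i).totalDegree
        = ((n + k) • p i + (-1 : ℝ) • (D * MvPolynomial.X i)).totalDegree := by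
          rw [neg_one_smul, ← sub_eq_add_neg]
      _ ≤ max ((n + k) • p i).totalDegree
            ((-1 : ℝ) • (D * MvPolynomial.X i)).totalDegree :=
          MvPolynomial.totalDegree_add _ _
      _ ≤ k := max_le h1 (le_trans (MvPolynomial.totalDegree_smul_le _ _) h2)
end

section
/- Let n ∈ ℕ with n ≥ 1 and k ∈ ℕ. Let T ⊂ ℝⁿ be a simplex, i.e., the convex hull of n + 1 affinely independent points, with diameter h_T, equipped with Lebesgue measure. Let M denote the subspace of the Hilbert space L²(T; ℝⁿ) consisting of (equivalence classes of) restrictions to T of maps x ↦ (q₁(x), …, qₙ(x)) where each qᵢ is a polynomial of total degree at most k; M is finite-dimensional, hence closed, and let Π denote the orthogonal projection of L²(T; ℝⁿ) onto M. Let τ : ℝⁿ → ℝⁿ be a Raviart–Thomas shape function of degree k, i.e., τ(x) = p(x) + g(x)·x for some polynomial g of total degree at most k and some n-tuple p of polynomials of total degree at most k, and let div τ := Σᵢ ∂τᵢ/∂xᵢ. Then ‖τ − Π τ‖_{L²(T)} ≤ (n · h_T / ((n+1)(n+k))) · ‖div τ‖_{L²(T)}. -/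
open MvPolynomial

namespace RTAux

variable {n : ℕ}

/-- degree of an exponent vector -/
noncomputable def deg (m : Fin n →₀ ℕ) : ℕ := m.sum fun _ e => e

lemma deg_add (m m' : Fin n →₀ ℕ) : deg (m + m') = deg m + deg m' :=
  Finsupp.sum_add_index' (fun _ => rfl) (fun _ _ _ => rfl)

lemma deg_single (j : Fin n) : deg (Finsupp.single j 1) = 1 := by
  simp [deg, Finsupp.sum_single_index]

lemma coeff_pderiv (j : Fin n) (m : Fin n →₀ ℕ) (g : MvPolynomial (Fin n) ℝ) :
    coeff m (pderiv j g) = ((m j : ℝ) + 1) * coeff (m + Finsupp.single j 1) g := by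
  classical
  induction g using MvPolynomial.induction_on' with
  | add p q hp hq => simp [map_add, coeff_add, hp, hq, mul_add]
  | monomial s a =>
    rw [pderiv_monomial, coeff_monomial, coeff_monomial]
    by_cases h : s = m + Finsupp.single j 1
    · subst h
      rw [if_pos (add_tsub_cancel_right _ _), if_pos rfl]
      rw [Finsupp.add_apply, Finsupp.single_eq_same]
      push_cast
      ring
    · rw [if_neg h]
      by_cases h2 : s - Finsupp.single j 1 = m
      · rw [if_pos h2]
        have hsj : s j = 0 := by
          by_contra hsj
          apply h
          ext i
          have hi := DFunLike.congr_fun h2 i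
          simp only [Finsupp.tsub_apply, Finsupp.add_apply] at hi ⊢
          by_cases hij : i = j
          · subst hij
            simp only [Finsupp.single_eq_same] at hi ⊢
            omega
          · simp only [Finsupp.single_eq_of_ne' (Ne.symm hij)] at hi ⊢
            omega
        simp [hsj]
      · rw [if_neg h2, mul_zero]

lemma coeff_X_mul_pderiv (j : Fin n) (m : Fin n →₀ ℕ) (g : MvPolynomial (Fin n) ℝ) :
    coeff m (X j * pderiv j g) = (m j : ℝ) * coeff m g := by
  classical
  rw [coeff_X_mul']
  by_cases hj : j ∈ m.support
  · rw [if_pos hj, coeff_pderiv]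
    have hm1 : 1 ≤ m j := Nat.one_le_iff_ne_zero.mpr (Finsupp.mem_support_iff.mp hj)
    have h1 : m - Finsupp.single j 1 + Finsupp.single j 1 = m := by
      ext i
      simp only [Finsupp.add_apply, Finsupp.tsub_apply]
      by_cases hij : i = j
      · subst hij; simp only [Finsupp.single_eq_same]; omega
      · simp [Finsupp.single_eq_of_ne' (Ne.symm hij)]
    rw [h1]
    rw [Finsupp.tsub_apply, Finsupp.single_eq_same]
    congr 1
    rw [Nat.cast_sub hm1]
    ring
  · rw [if_neg hj]
    have : m j = 0 := Finsupp.notMem_support_iff.mp hj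
    simp [this]

lemma coeff_euler (m : Fin n →₀ ℕ) (g : MvPolynomial (Fin n) ℝ) :
    coeff m (∑ j : Fin n, X j * pderiv j g) = (deg m : ℝ) * coeff m g := by
  rw [coeff_sum]
  simp only [coeff_X_mul_pderiv]
  rw [← Finset.sum_mul]
  congr 1
  rw [deg, Finsupp.sum_fintype _ _ (fun _ => rfl)]
  push_cast
  rfl

lemma deg_le_of_coeff_pderiv_ne {j : Fin n} {m : Fin n →₀ ℕ} {q : MvPolynomial (Fin n) ℝ} {k : ℕ}
    (hq : q.totalDegree ≤ k) (h : coeff m (pderiv j q) ≠ 0) : deg m + 1 ≤ k := by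
  rw [coeff_pderiv] at h
  have h2 : coeff (m + Finsupp.single j 1) q ≠ 0 := fun h0 => h (by rw [h0, mul_zero])
  have h3 : deg (m + Finsupp.single j 1) ≤ k :=
    le_trans (le_totalDegree (p := q) (Finsupp.mem_support_iff.mpr h2)) hq
  have hd : deg (m + Finsupp.single j 1) = deg m + 1 := by rw [deg_add, deg_single]
  omega

lemma totalDegree_divp_mul_X_le {k : ℕ} (p : Fin n → MvPolynomial (Fin n) ℝ)
    (hp : ∀ i, (p i).totalDegree ≤ k) (i : Fin n) :
    ((∑ j : Fin n, pderiv j (p j)) * X i).totalDegree ≤ k := by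
  classical
  apply Finset.sup_le
  intro m hm
  rw [support_mul_X, Finset.mem_map] at hm
  obtain ⟨m', hm', rfl⟩ := hm
  rw [mem_support_iff, coeff_sum] at hm'
  obtain ⟨j, _, hj⟩ := Finset.exists_ne_zero_of_sum_ne_zero hm'
  have := deg_le_of_coeff_pderiv_ne (hp j) hj
  have hd : deg (m' + Finsupp.single i 1) = deg m' + 1 := by rw [deg_add, deg_single]
  show deg (m' + Finsupp.single i 1) ≤ k
  omega

lemma totalDegree_divp_le {k : ℕ} (p : Fin n → MvPolynomial (Fin n) ℝ)
    (hp : ∀ i, (p i).totalDegree ≤ k) :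
    (∑ j : Fin n, pderiv j (p j)).totalDegree ≤ k := by
  apply Finset.sup_le
  intro m hm
  rw [mem_support_iff, coeff_sum] at hm
  obtain ⟨j, _, hj⟩ := Finset.exists_ne_zero_of_sum_ne_zero hm
  have := deg_le_of_coeff_pderiv_ne (hp j) hj
  show deg m ≤ k
  omega

lemma totalDegree_keuler_mul_X_le {k : ℕ} (g : MvPolynomial (Fin n) ℝ)
    (hg : g.totalDegree ≤ k) (i : Fin n) :
    ((C (k : ℝ) * g - ∑ j : Fin n, X j * pderiv j g) * X i).totalDegree ≤ k := by
  classical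
  apply Finset.sup_le
  intro m hm
  rw [support_mul_X, Finset.mem_map] at hm
  obtain ⟨m', hm', rfl⟩ := hm
  rw [mem_support_iff, coeff_sub, coeff_C_mul, coeff_euler] at hm'
  have hg' : coeff m' g ≠ 0 := by
    intro h0; rw [h0] at hm'; simp at hm'
  have hle : deg m' ≤ k := le_totalDegree (p := g) (Finsupp.mem_support_iff.mpr hg') |>.trans hg
  have hne : deg m' ≠ k := by
    intro h; rw [h] at hm'; simp at hm'
  have hd : deg (m' + Finsupp.single i 1) = deg m' + 1 := by rw [deg_add, deg_single]
  show deg (m' + Finsupp.single i 1) ≤ k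
  omega

lemma totalDegree_euler_le {k : ℕ} (g : MvPolynomial (Fin n) ℝ) (hg : g.totalDegree ≤ k) :
    (∑ j : Fin n, X j * pderiv j g).totalDegree ≤ k := by
  apply Finset.sup_le
  intro m hm
  rw [mem_support_iff, coeff_euler] at hm
  have hg' : coeff m g ≠ 0 := by intro h0; rw [h0, mul_zero] at hm; exact hm rfl
  show deg m ≤ k
  exact le_trans (le_totalDegree (p := g) (Finsupp.mem_support_iff.mpr hg')) hg

end RTAux

open MvPolynomial in
lemma RTAux.continuous_eval {n : ℕ} (q : MvPolynomial (Fin n) ℝ) :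
    Continuous fun x : EuclideanSpace ℝ (Fin n) => eval (fun j => x j) q := by
  induction q using MvPolynomial.induction_on with
  | C a => simpa [eval_C] using continuous_const
  | add p q hp hq => simp only [eval_add]; exact hp.add hq
  | mul_X p j hp => simp only [eval_mul, eval_X]; exact hp.mul (EuclideanSpace.proj (𝕜 := ℝ) j).continuous

open MeasureTheory

/-- Lemma 7 (single-simplex form): let `T ⊂ ℝⁿ` be a simplex with diameter
`h_T`, `M ⊆ L²(T; ℝⁿ)` the subspace of (a.e. classes of) vector fields with
polynomial components of total degree at most `k`, and let `Pτ` be the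
orthogonal projection (= best `L²(T)` approximation in `M`) of a
Raviart–Thomas shape function `τ(x) = p(x) + g(x)·x` of degree `k`. Then
`‖τ − Pτ‖_{L²(T)} ≤ (n h_T / ((n+1)(n+k))) ‖div τ‖_{L²(T)}`. -/
theorem raviartThomas_projection_estimate
    (n k : ℕ) (hn : 1 ≤ n)
    (v : Fin (n + 1) → EuclideanSpace ℝ (Fin n)) (hv : AffineIndependent ℝ v)
    (T : Set (EuclideanSpace ℝ (Fin n))) (hT : T = convexHull ℝ (Set.range v))
    (μ : Measure (EuclideanSpace ℝ (Fin n))) (hμ : μ = volume.restrict T)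
    (M : Submodule ℝ (Lp (EuclideanSpace ℝ (Fin n)) 2 μ))
    (hM : ∀ f : Lp (EuclideanSpace ℝ (Fin n)) 2 μ, f ∈ M ↔
      ∃ q : Fin n → MvPolynomial (Fin n) ℝ, (∀ i, (q i).totalDegree ≤ k) ∧
        ∀ᵐ x ∂μ, ∀ i, f x i = MvPolynomial.eval (fun j => x j) (q i))
    (g : MvPolynomial (Fin n) ℝ) (hg : g.totalDegree ≤ k)
    (p : Fin n → MvPolynomial (Fin n) ℝ) (hp : ∀ i, (p i).totalDegree ≤ k)
    (τ : Fin n → MvPolynomial (Fin n) ℝ)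
    (hτ : ∀ i, τ i = p i + g * MvPolynomial.X i)
    (τf : Lp (EuclideanSpace ℝ (Fin n)) 2 μ)
    (hτf : ∀ᵐ x ∂μ, ∀ i, τf x i = MvPolynomial.eval (fun j => x j) (τ i))
    (dτ : Lp ℝ 2 μ)
    (hdτ : ∀ᵐ x ∂μ, dτ x =
      MvPolynomial.eval (fun j => x j) (∑ i, MvPolynomial.pderiv i (τ i)))
    (Pτ : Lp (EuclideanSpace ℝ (Fin n)) 2 μ)
    (hPτM : Pτ ∈ M) (hPmin : ∀ f ∈ M, ‖τf - Pτ‖ ≤ ‖τf - f‖) :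
    ‖τf - Pτ‖ ≤
      ((n : ℝ) * Metric.diam T / (((n : ℝ) + 1) * ((n : ℝ) + (k : ℝ)))) * ‖dτ‖ := by
  classical
  open MvPolynomial RTAux in
  -- basic facts about `T` and `μ`
  have hTcomp : IsCompact T := hT ▸ (Set.finite_range v).isCompact_convexHull (𝕜 := ℝ)
  have hTb : Bornology.IsBounded T := hTcomp.isBounded
  have hTmeas : MeasurableSet T := hTcomp.isClosed.measurableSet
  haveI : IsFiniteMeasure μ := by
    refine ⟨?_⟩
    rw [hμ, Measure.restrict_apply_univ]
    exact hTcomp.measure_lt_top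
  have hvT : ∀ i, v i ∈ T := fun i => hT ▸ subset_convexHull ℝ _ ⟨i, rfl⟩
  have hn1 : (0:ℝ) < (n:ℝ) + 1 := by positivity
  have hn1ne : ((n:ℝ) + 1) ≠ 0 := ne_of_gt hn1
  have hnR : (1:ℝ) ≤ (n:ℝ) := by exact_mod_cast hn
  set c : ℝ := (n:ℝ) + (k:ℝ) with hcdef
  have hcpos : 0 < c := by have : (0:ℝ) ≤ (k:ℝ) := Nat.cast_nonneg k; simp only [hcdef]; linarith
  have hc : c ≠ 0 := ne_of_gt hcpos
  have hdiam : 0 ≤ Metric.diam T := Metric.diam_nonneg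
  -- the barycenter
  set b : EuclideanSpace ℝ (Fin n) := ((n:ℝ) + 1)⁻¹ • ∑ i, v i with hbdef
  have hvb : ∀ i, ‖v i - b‖ ≤ (n:ℝ) / ((n:ℝ) + 1) * Metric.diam T := by
    intro i
    have h1 : v i - b = ((n:ℝ) + 1)⁻¹ • ∑ j, (v i - v j) := by
      have e1 : ((n:ℝ) + 1)⁻¹ • (((n:ℝ) + 1) • v i) = v i := by
        rw [smul_smul, inv_mul_cancel₀ hn1ne, one_smul]
      calc v i - b = ((n:ℝ) + 1)⁻¹ • (((n:ℝ) + 1) • v i) - ((n:ℝ) + 1)⁻¹ • ∑ j, v j := by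
            rw [e1, hbdef]
        _ = ((n:ℝ) + 1)⁻¹ • ((((n:ℝ) + 1) • v i) - ∑ j, v j) := (smul_sub _ _ _).symm
        _ = ((n:ℝ) + 1)⁻¹ • ∑ j, (v i - v j) := by
            congr 1
            rw [Finset.sum_sub_distrib, Finset.sum_const, Finset.card_univ, Fintype.card_fin]
            congr 1
            rw [← Nat.cast_smul_eq_nsmul ℝ]
            push_cast
            ring_nf
    have hsum : ∑ j, ‖v i - v j‖ ≤ (n:ℝ) * Metric.diam T := by
      have h0 : ‖v i - v i‖ = 0 := by simp
      calc ∑ j, ‖v i - v j‖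
          = ∑ j ∈ Finset.univ.erase i, ‖v i - v j‖ :=
            (Finset.sum_erase (f := fun j => ‖v i - v j‖) (a := i) Finset.univ h0).symm
        _ ≤ (Finset.univ.erase i).card • Metric.diam T := by
            refine Finset.sum_le_card_nsmul _ _ (Metric.diam T) ?_
            intro j _
            rw [← dist_eq_norm]
            exact Metric.dist_le_diam_of_mem hTb (hvT i) (hvT j)
        _ = (n:ℝ) * Metric.diam T := by
            rw [Finset.card_erase_of_mem (Finset.mem_univ i), Finset.card_univ, Fintype.card_fin]
            simp only [Nat.add_sub_cancel, nsmul_eq_mul]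
    rw [h1, norm_smul, Real.norm_eq_abs, abs_of_pos (inv_pos.mpr hn1)]
    calc ((n:ℝ) + 1)⁻¹ * ‖∑ j, (v i - v j)‖
        ≤ ((n:ℝ) + 1)⁻¹ * ∑ j, ‖v i - v j‖ := by
          exact mul_le_mul_of_nonneg_left (norm_sum_le _ _) (le_of_lt (inv_pos.mpr hn1))
      _ ≤ ((n:ℝ) + 1)⁻¹ * ((n:ℝ) * Metric.diam T) :=
          mul_le_mul_of_nonneg_left hsum (le_of_lt (inv_pos.mpr hn1))
      _ = (n:ℝ) / ((n:ℝ) + 1) * Metric.diam T := by field_simp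
  have hball : T ⊆ Metric.closedBall b ((n:ℝ) / ((n:ℝ) + 1) * Metric.diam T) := by
    have hsub : convexHull ℝ (Set.range v)
        ⊆ Metric.closedBall b ((n:ℝ) / ((n:ℝ) + 1) * Metric.diam T) := by
      refine convexHull_min ?_ (convex_closedBall _ _)
      rintro y ⟨i, rfl⟩
      rw [Metric.mem_closedBall, dist_eq_norm]
      exact hvb i
    intro x hx
    exact hsub (hT ▸ hx)
  -- the divergence polynomial and the competitor polynomial vector `s`
  set D : MvPolynomial (Fin n) ℝ := ∑ i, pderiv i (τ i) with hDdef
  have hDe : D = (∑ j, pderiv j (p j)) + (∑ j, X j * pderiv j g)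
      + (n : MvPolynomial (Fin n) ℝ) * g := by
    rw [hDdef]
    have : ∀ i : Fin n, pderiv i (τ i) = pderiv i (p i) + (pderiv i g * X i + g) := by
      intro i
      rw [hτ i, map_add, pderiv_mul, pderiv_X_self, mul_one]
    simp only [this, Finset.sum_add_distrib, Finset.sum_const, Finset.card_univ, Fintype.card_fin]
    have hEc : ∑ i : Fin n, pderiv i g * X i = ∑ i : Fin n, X i * pderiv i g :=
      Finset.sum_congr rfl fun j _ => mul_comm _ _
    have hng : n • g = (n : MvPolynomial (Fin n) ℝ) * g := by
      rw [← Nat.cast_smul_eq_nsmul (MvPolynomial (Fin n) ℝ) n g, smul_eq_mul]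
    rw [hEc, hng]
    ring
  set s : Fin n → MvPolynomial (Fin n) ℝ :=
    fun i => τ i - C c⁻¹ * (D * (X i - C (b i))) with hsdef
  have hsdeg : ∀ i, (s i).totalDegree ≤ k := by
    intro i
    have hcc : (C c * C c⁻¹ : MvPolynomial (Fin n) ℝ) = 1 := by
      rw [← C_mul, mul_inv_cancel₀ hc, C_1]
    have hnk : (C c : MvPolynomial (Fin n) ℝ)
        = (n : MvPolynomial (Fin n) ℝ) + C (k:ℝ) := by
      rw [hcdef, C_add, C_eq_coe_nat]
    have hkey : C c * s i = C c * p i + ((C (k:ℝ) * g - ∑ j, X j * pderiv j g) * X i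
        + (C (b i) * D - (∑ j, pderiv j (p j)) * X i)) := by
      calc C c * s i = C c * τ i - (C c * C c⁻¹) * (D * (X i - C (b i))) := by
            simp only [hsdef]; ring
        _ = C c * τ i - D * (X i - C (b i)) := by rw [hcc, one_mul]
        _ = _ := by rw [hτ i, hDe, hnk]; ring
    have hA : (C c * p i).totalDegree ≤ k :=
      le_trans (totalDegree_mul _ _) (by simp [totalDegree_C, hp i])
    have hB := totalDegree_keuler_mul_X_le g hg i
    have hDdeg : D.totalDegree ≤ k := by
      rw [hDe]
      refine le_trans (totalDegree_add _ _) (max_le (le_trans (totalDegree_add _ _)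
        (max_le (totalDegree_divp_le p hp) (totalDegree_euler_le g hg))) ?_)
      refine le_trans (totalDegree_mul _ _) ?_
      have hn0 : ((n : MvPolynomial (Fin n) ℝ)).totalDegree = 0 := by
        rw [← C_eq_coe_nat]; exact totalDegree_C _
      simpa [hn0] using hg
    have hC : (C (b i) * D).totalDegree ≤ k :=
      le_trans (totalDegree_mul _ _) (by simp [totalDegree_C, hDdeg])
    have hF := totalDegree_divp_mul_X_le p hp i
    have h1 : (C c * s i).totalDegree ≤ k := by
      rw [hkey]
      refine le_trans (totalDegree_add _ _) (max_le hA (le_trans (totalDegree_add _ _)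
        (max_le hB (le_trans (totalDegree_sub _ _) (max_le hC hF)))))
    have h2 : s i = C c⁻¹ * (C c * s i) := by
      rw [← mul_assoc, ← C_mul, inv_mul_cancel₀ hc, C_1, one_mul]
    calc (s i).totalDegree = (C c⁻¹ * (C c * s i)).totalDegree := by rw [← h2]
      _ ≤ (C c⁻¹).totalDegree + (C c * s i).totalDegree := totalDegree_mul _ _
      _ ≤ k := by simpa [totalDegree_C] using h1
  -- the competitor as an element of `L²`
  set G : EuclideanSpace ℝ (Fin n) → EuclideanSpace ℝ (Fin n) :=
    fun x => (EuclideanSpace.equiv (Fin n) ℝ).symm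
      (fun i => MvPolynomial.eval (fun j => x j) (s i)) with hGdef
  have hGx : ∀ x i, G x i = MvPolynomial.eval (fun j => x j) (s i) := fun x i => rfl
  have hGcont : Continuous G := by
    rw [hGdef]
    exact (EuclideanSpace.equiv (Fin n) ℝ).symm.continuous.comp
      (continuous_pi fun i => RTAux.continuous_eval (s i))
  have hGmem : MemLp G 2 μ := by
    obtain ⟨Cb, hCb⟩ := hTcomp.exists_bound_of_continuousOn hGcont.continuousOn
    refine MemLp.of_bound hGcont.aestronglyMeasurable Cb ?_
    rw [hμ]
    filter_upwards [ae_restrict_mem hTmeas] with x hx using hCb x hx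
  set fLp : Lp (EuclideanSpace ℝ (Fin n)) 2 μ := MemLp.toLp G hGmem with hfdef
  have hfM : fLp ∈ M := by
    refine (hM fLp).mpr ⟨s, hsdeg, ?_⟩
    filter_upwards [hGmem.coeFn_toLp] with x hx i
    rw [hfdef, hx, hGx]
  -- the constant
  set C' : ℝ := (n : ℝ) * Metric.diam T / (((n : ℝ) + 1) * c) with hC'def
  have hC'0 : 0 ≤ C' := by
    rw [hC'def]
    exact div_nonneg (mul_nonneg (Nat.cast_nonneg n) hdiam) (le_of_lt (mul_pos hn1 hcpos))
  -- the pointwise bound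
  have hxT : ∀ᵐ x ∂μ, x ∈ T := by rw [hμ]; exact ae_restrict_mem hTmeas
  have key : ∀ᵐ x ∂μ, ‖(⇑(τf - fLp)) x‖ ≤ ‖(⇑(C' • dτ)) x‖ := by
    filter_upwards [Lp.coeFn_sub τf fLp, hGmem.coeFn_toLp, hτf, hdτ,
      Lp.coeFn_smul C' dτ, hxT] with x h1 h2 h3 h4 h5 h6
    have hvec : τf x - G x
        = (c⁻¹ * MvPolynomial.eval (fun j => x j) D) • (x - b) := by
      refine (EuclideanSpace.equiv (Fin n) ℝ).injective (funext fun i => ?_)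
      show (τf x - G x) i = ((c⁻¹ * MvPolynomial.eval (fun j => x j) D) • (x - b)) i
      rw [PiLp.sub_apply, PiLp.smul_apply, PiLp.sub_apply, h3 i, hGx, hsdef]
      simp only [smul_eq_mul, map_sub, eval_mul, eval_C, eval_X]
      ring
    have hfx : fLp x = G x := by rw [hfdef, h2]
    rw [h1, Pi.sub_apply, hfx, hvec, h5, Pi.smul_apply, h4, smul_eq_mul, norm_smul,
      Real.norm_eq_abs, Real.norm_eq_abs]
    have hxb : ‖x - b‖ ≤ (n:ℝ) / ((n:ℝ) + 1) * Metric.diam T := by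
      have := hball h6
      rwa [Metric.mem_closedBall, dist_eq_norm] at this
    have habs : |c⁻¹ * MvPolynomial.eval (fun j => x j) D|
        = c⁻¹ * |MvPolynomial.eval (fun j => x j) D| := by
      rw [abs_mul, abs_of_pos (inv_pos.mpr hcpos)]
    rw [habs, abs_mul, abs_of_nonneg hC'0]
    calc c⁻¹ * |MvPolynomial.eval (fun j => x j) D| * ‖x - b‖
        ≤ c⁻¹ * |MvPolynomial.eval (fun j => x j) D|
            * ((n:ℝ) / ((n:ℝ) + 1) * Metric.diam T) := by
          refine mul_le_mul_of_nonneg_left hxb ?_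
          exact mul_nonneg (le_of_lt (inv_pos.mpr hcpos)) (abs_nonneg _)
      _ = C' * |MvPolynomial.eval (fun j => x j) D| := by
          rw [hC'def]; field_simp
  -- conclude
  calc ‖τf - Pτ‖ ≤ ‖τf - fLp‖ := hPmin fLp hfM
    _ = (eLpNorm (⇑(τf - fLp)) 2 μ).toReal := Lp.norm_def _
    _ ≤ (eLpNorm (⇑(C' • dτ)) 2 μ).toReal :=
        ENNReal.toReal_mono (Lp.eLpNorm_ne_top _) (eLpNorm_mono_ae key)
    _ = ‖C' • dτ‖ := (Lp.norm_def _).symm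
    _ = C' * ‖dτ‖ := by rw [norm_smul, Real.norm_eq_abs, abs_of_nonneg hC'0]
    _ = ((n : ℝ) * Metric.diam T / (((n : ℝ) + 1) * ((n : ℝ) + (k : ℝ)))) * ‖dτ‖ := by
        rw [hC'def, hcdef]
end

section
/- Let n ∈ ℕ with n ≥ 1, let Ω ⊆ ℝⁿ be a bounded measurable set equipped with Lebesgue measure, let M be a closed subspace of the real Hilbert space L²(Ω), and let P denote the orthogonal projection of L²(Ω) onto M. Let w ∈ L²(Ω) be orthogonal to M, and let γ : ℝⁿ → ℝ be Lipschitz continuous with Lipschitz constant L ≥ 0. Then the pointwise product γ·w belongs to L²(Ω) and ‖P(γ·w)‖_{L²(Ω)} ≤ L · diam(Ω) · ‖w‖_{L²(Ω)}. -/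
open MeasureTheory Metric
open scoped InnerProductSpace ENNReal NNReal

/-!
Since `w ⊥ M`, `P (γ w) = P ((γ - c) w)` for every constant `c`, and `P` does not increase norms.
Taking `c = γ x₀` for a point `x₀ ∈ Ω`, the Lipschitz bound gives `|γ - c| ≤ L · diam Ω` on `Ω`,
hence `‖(γ - c) w‖ ≤ L · diam Ω · ‖w‖`.
-/

section Projection

variable {E : Type*} [NormedAddCommGroup E] [InnerProductSpace ℝ E]

theorem norm_le_of_inner_sub_self_eq_zero {f p : E} (h : ⟪f - p, p⟫_ℝ = 0) : ‖p‖ ≤ ‖f‖ := by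
  have hpyth : ‖f‖ * ‖f‖ = ‖f - p‖ * ‖f - p‖ + ‖p‖ * ‖p‖ := by
    rw [← norm_add_sq_eq_norm_sq_add_norm_sq_real h, sub_add_cancel]
  exact nonneg_le_nonneg_of_sq_le_sq (norm_nonneg f) (by linarith [mul_self_nonneg ‖f - p‖])

theorem eq_zero_of_inner_sub_self_eq_zero {f p : E} (h : ⟪f - p, p⟫_ℝ = 0)
    (hf : ⟪f, p⟫_ℝ = 0) : p = 0 := by
  rw [inner_sub_left, hf, zero_sub, neg_eq_zero] at h
  exact inner_self_eq_zero.mp h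

theorem norm_map_add_smul_le_of_orthogonal {M : Submodule ℝ E} {P : E →ₗ[ℝ] E}
    (hPmem : ∀ f, P f ∈ M) (hPorth : ∀ f, ∀ m ∈ M, ⟪f - P f, m⟫_ℝ = 0)
    {w : E} (hw : ∀ m ∈ M, ⟪w, m⟫_ℝ = 0) (f : E) (c : ℝ) :
    ‖P (f + c • w)‖ ≤ ‖f‖ := by
  have hPw : P w = 0 :=
    eq_zero_of_inner_sub_self_eq_zero (hPorth w _ (hPmem w)) (hw _ (hPmem w))
  rw [map_add, map_smul, hPw, smul_zero, add_zero]
  exact norm_le_of_inner_sub_self_eq_zero (hPorth f _ (hPmem f))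

end Projection

theorem LipschitzOnWith.exists_forall_abs_sub_le {α : Type*} [PseudoMetricSpace α]
    {γ : α → ℝ} {K : ℝ≥0} {s : Set α} (hγ : LipschitzOnWith K γ s) (hs : Bornology.IsBounded s) :
    ∃ c, ∀ x ∈ s, |γ x - c| ≤ K * diam s := by
  rcases s.eq_empty_or_nonempty with rfl | ⟨x₀, hx₀⟩
  · exact ⟨0, by simp⟩
  refine ⟨γ x₀, fun x hx => ?_⟩
  calc |γ x - γ x₀| = dist (γ x) (γ x₀) := (Real.dist_eq _ _).symm
    _ ≤ K * dist x x₀ := hγ.dist_le_mul x hx x₀ hx₀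
    _ ≤ K * diam s := by gcongr; exact dist_le_diam_of_mem hs hx hx₀

section Lp

variable {α : Type*} [MeasurableSpace α] {μ : Measure α} {p : ℝ≥0∞} {s : Set α}
  {γ : α → ℝ} {c C : ℝ}

theorem memLp_mul_of_forall_abs_sub_le (hμs : ∀ᵐ x ∂μ, x ∈ s) (hγ : AEStronglyMeasurable γ μ)
    (hc : ∀ x ∈ s, |γ x - c| ≤ C) {w : α → ℝ} (hw : MemLp w p μ) :
    MemLp (fun x => γ x * w x) p μ := by
  refine hw.of_le_mul (hγ.mul hw.1) (c := |c| + C) ?_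
  filter_upwards [hμs] with x hx
  have hγx : |γ x| ≤ |c| + C := by
    linarith [abs_sub_abs_le_abs_sub (γ x) c, hc x hx]
  simp only [Real.norm_eq_abs, abs_mul]
  exact mul_le_mul_of_nonneg_right hγx (abs_nonneg _)

theorem norm_toLp_mul_sub_smul_le (hμs : ∀ᵐ x ∂μ, x ∈ s) (hc : ∀ x ∈ s, |γ x - c| ≤ C)
    {w : Lp ℝ p μ} (hmem : MemLp (fun x => γ x * w x) p μ) :
    ‖hmem.toLp _ - c • w‖ ≤ C * ‖w‖ := by
  refine Lp.norm_le_mul_norm_of_ae_le_mul ?_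
  filter_upwards [hμs, Lp.coeFn_sub (hmem.toLp _) (c • w), hmem.coeFn_toLp,
    Lp.coeFn_smul c w] with x hx hsub htoLp hsmul
  rw [hsub, Pi.sub_apply, htoLp, hsmul, Pi.smul_apply, smul_eq_mul, ← sub_mul, norm_mul,
    Real.norm_eq_abs]
  exact mul_le_mul_of_nonneg_right (hc x hx) (norm_nonneg _)

end Lp

theorem projection_of_lipschitz_times_orthogonal_general
    (n : ℕ)
    (Ω : Set (EuclideanSpace ℝ (Fin n)))
    (hΩm : MeasurableSet Ω) (hΩb : Bornology.IsBounded Ω)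
    (μ : Measure (EuclideanSpace ℝ (Fin n))) (hμ : μ = volume.restrict Ω)
    (M : Submodule ℝ (Lp ℝ 2 μ))
    (P : Lp ℝ 2 μ →L[ℝ] Lp ℝ 2 μ)
    (hPmem : ∀ f : Lp ℝ 2 μ, P f ∈ M)
    (hPorth : ∀ f : Lp ℝ 2 μ, ∀ m ∈ M, (inner ℝ (f - P f) m : ℝ) = 0)
    (w : Lp ℝ 2 μ) (hw : ∀ m ∈ M, (inner ℝ w m : ℝ) = 0)
    (γ : EuclideanSpace ℝ (Fin n) → ℝ) (L : ℝ) (hL : 0 ≤ L)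
    (hγ : ∀ x y, |γ x - γ y| ≤ L * dist x y) :
    ∃ hmem : MemLp (fun x => γ x * w x) 2 μ,
      ‖P (hmem.toLp _)‖ ≤ L * Metric.diam Ω * ‖w‖ := by
  have hlip : LipschitzWith ⟨L, hL⟩ γ :=
    LipschitzWith.of_dist_le_mul fun x y => (Real.dist_eq _ _).trans_le (hγ x y)
  have hμΩ : ∀ᵐ x ∂μ, x ∈ Ω := hμ ▸ ae_restrict_mem hΩm
  obtain ⟨c, hc⟩ := hlip.lipschitzOnWith.exists_forall_abs_sub_le hΩb
  have hmem := memLp_mul_of_forall_abs_sub_le hμΩ hlip.continuous.aestronglyMeasurable hc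
    (Lp.memLp w)
  refine ⟨hmem, ?_⟩
  calc ‖P (hmem.toLp _)‖ = ‖P (hmem.toLp _ - c • w + c • w)‖ := by rw [sub_add_cancel]
    _ ≤ ‖hmem.toLp _ - c • w‖ :=
      norm_map_add_smul_le_of_orthogonal (P := P.toLinearMap) hPmem hPorth hw _ c
    _ ≤ L * Metric.diam Ω * ‖w‖ := norm_toLp_mul_sub_smul_le hμΩ hc hmem

/-- Key step of the proof of Theorem 2(b): if `Ω ⊆ ℝⁿ` is bounded and
measurable, `M` a closed subspace of `L²(Ω)`, `P` the orthogonal projection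
onto `M`, `w ∈ L²(Ω)` orthogonal to `M`, and `γ` is `L`-Lipschitz, then
`γ·w ∈ L²(Ω)` and `‖P(γ·w)‖ ≤ L · diam(Ω) · ‖w‖`. -/
theorem projection_of_lipschitz_times_orthogonal
    (n : ℕ) (hn : 1 ≤ n)
    (Ω : Set (EuclideanSpace ℝ (Fin n)))
    (hΩm : MeasurableSet Ω) (hΩb : Bornology.IsBounded Ω)
    (μ : Measure (EuclideanSpace ℝ (Fin n))) (hμ : μ = volume.restrict Ω)
    (M : Submodule ℝ (Lp ℝ 2 μ)) (hMc : IsClosed (M : Set (Lp ℝ 2 μ)))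
    (P : Lp ℝ 2 μ →L[ℝ] Lp ℝ 2 μ)
    (hPmem : ∀ f : Lp ℝ 2 μ, P f ∈ M)
    (hPorth : ∀ f : Lp ℝ 2 μ, ∀ m ∈ M, (inner ℝ (f - P f) m : ℝ) = 0)
    (w : Lp ℝ 2 μ) (hw : ∀ m ∈ M, (inner ℝ w m : ℝ) = 0)
    (γ : EuclideanSpace ℝ (Fin n) → ℝ) (L : ℝ) (hL : 0 ≤ L)
    (hγ : ∀ x y, |γ x - γ y| ≤ L * dist x y) :
    ∃ hmem : MemLp (fun x => γ x * w x) 2 μ,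
      ‖P (hmem.toLp _)‖ ≤ L * Metric.diam Ω * ‖w‖ :=
  projection_of_lipschitz_times_orthogonal_general n Ω hΩm hΩb μ hμ M P hPmem hPorth w hw γ L hL hγ
end
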